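/- arXiv:math/0504540 — 5 statements merged into one kernel-verified Lean document; each statement's English description precedes it below -/
import Mathlib

section
/- Let v, E, Ξ be as above with Ξ nonvanishing on a simply connected open set U, and let Q = Ξ²(E-v) + (1/2)ΞΞ'' - (1/4)(Ξ')² (a constant). Then the function Λ(x) = √(Ξ(x)) · exp(∫ √(-Q)/Ξ(x) dx) satisfies -Λ'' + v·Λ = E·Λ on U. -/
open Complex

/-- The integral-representation solution `Λ = √Ξ · exp(∫ √(-Q)/Ξ)`.
Here `S` is a fixed holomorphic branch of `√Ξ` on `U`, `r` a fixed square root of `-Q`,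
and `R` a primitive of `r/Ξ` on `U`. -/
noncomputable def Lam (S R : ℂ → ℂ) : ℂ → ℂ := fun t => S t * Complex.exp (R t)

/-- Let `Ξ` be a nonvanishing holomorphic solution of `Ξ''' - 4(v-E)Ξ' - 2v'Ξ = 0` on a
simply connected open set `U`, and let `Q = Ξ²(E-v) + (1/2)ΞΞ'' - (1/4)(Ξ')²` (a constant).
Then `Λ(x) = √(Ξ(x)) · exp(∫ √(-Q)/Ξ dx)` satisfies `-Λ'' + v·Λ = E·Λ`, i.e.
`Λ'' = (v - E)·Λ`, on `U`. -/
theorem integral_representation_solves_schroedinger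
    (U : Set ℂ) (hU : IsOpen U) (hUsc : SimplyConnectedSpace U)
    (v Ξ S R : ℂ → ℂ) (E Q r : ℂ)
    (hv : DifferentiableOn ℂ v U) (hΞ : DifferentiableOn ℂ Ξ U)
    (hΞ0 : ∀ x ∈ U, Ξ x ≠ 0)
    (hode : ∀ x ∈ U,
      iteratedDeriv 3 Ξ x - 4 * (v x - E) * deriv Ξ x - 2 * deriv v x * Ξ x = 0)
    (hQ : ∀ x ∈ U,
      Ξ x ^ 2 * (E - v x) + (1/2) * Ξ x * iteratedDeriv 2 Ξ x - (1/4) * (deriv Ξ x) ^ 2 = Q)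
    (hr : r ^ 2 = -Q)
    (hS : DifferentiableOn ℂ S U) (hS2 : ∀ x ∈ U, S x ^ 2 = Ξ x)
    (hR : ∀ x ∈ U, HasDerivAt R (r / Ξ x) x) :
    ∀ x ∈ U, deriv (deriv (Lam S R)) x = (v x - E) * Lam S R x := by
  -- basic facts
  have hS0 : ∀ x ∈ U, S x ≠ 0 := by
    intro x hx h
    exact hΞ0 x hx (by rw [← hS2 x hx, h]; ring)
  have hSda : ∀ x ∈ U, HasDerivAt S (deriv S x) x := fun x hx =>
    (hS.differentiableAt (hU.mem_nhds hx)).hasDerivAt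
  have hSan : AnalyticOnNhd ℂ S U := hS.analyticOnNhd hU
  have hS'diff : DifferentiableOn ℂ (deriv S) U :=
    (hSan.deriv).differentiableOn
  have hS'da : ∀ x ∈ U, HasDerivAt (deriv S) (deriv (deriv S) x) x := fun x hx =>
    (hS'diff.differentiableAt (hU.mem_nhds hx)).hasDerivAt
  have hexp : ∀ x ∈ U, HasDerivAt (fun t => Complex.exp (R t))
      (Complex.exp (R x) * (r / Ξ x)) x := fun x hx => (hR x hx).cexp
  -- first derivative of Lam on U
  have hLam : ∀ x ∈ U, HasDerivAt (Lam S R)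
      ((deriv S x + r / S x) * Complex.exp (R x)) x := by
    intro x hx
    have h := (hSda x hx).mul (hexp x hx)
    have hΞx : Ξ x = S x ^ 2 := (hS2 x hx).symm
    refine h.congr_deriv ?_
    rw [hΞx]
    field_simp [hS0 x hx]
  have hderivLam : Set.EqOn (deriv (Lam S R))
      (fun t => (deriv S t + r / S t) * Complex.exp (R t)) U := fun x hx =>
    (hLam x hx).deriv
  -- relations between derivatives of Ξ and S
  have hΞ'eq : Set.EqOn (deriv Ξ) (fun t => 2 * S t * deriv S t) U := by
    intro x hx
    have hev : Ξ =ᶠ[nhds x] fun t => S t ^ 2 :=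
      Filter.eventuallyEq_of_mem (hU.mem_nhds hx) (fun t ht => (hS2 t ht).symm)
    have : HasDerivAt (fun t => S t ^ 2) (2 * S x * deriv S x) x := by
      have := (hSda x hx).pow 2
      refine this.congr_deriv ?_
      norm_num
    rw [hev.deriv_eq, this.deriv]
  intro x hx
  have hSx := hS0 x hx
  have hΞx : Ξ x = S x ^ 2 := (hS2 x hx).symm
  -- second derivative of Ξ at x
  have hΞ''x : iteratedDeriv 2 Ξ x
      = 2 * (deriv S x * deriv S x) + 2 * (S x * deriv (deriv S) x) := by
    have hev : deriv Ξ =ᶠ[nhds x] fun t => 2 * S t * deriv S t :=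
      Filter.eventuallyEq_of_mem (hU.mem_nhds hx) hΞ'eq
    have hd : HasDerivAt (fun t => 2 * S t * deriv S t)
        (2 * (deriv S x * deriv S x) + 2 * (S x * deriv (deriv S) x)) x := by
      have := ((hSda x hx).mul (hS'da x hx)).const_mul (2 : ℂ)
      exact (this.congr_deriv (by ring)).congr_of_eventuallyEq
        (Filter.Eventually.of_forall fun t => by simp only [Pi.mul_apply]; ring)
    rw [show (2 : ℕ) = 1 + 1 from rfl, iteratedDeriv_succ, iteratedDeriv_one,
      hev.deriv_eq, hd.deriv]
  have hΞ'x : deriv Ξ x = 2 * S x * deriv S x := hΞ'eq hx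
  -- Q relation in terms of S
  have hQx := hQ x hx
  rw [hΞx, hΞ''x, hΞ'x] at hQx
  -- compute second derivative of Lam at x
  have hev : deriv (Lam S R) =ᶠ[nhds x]
      fun t => (deriv S t + r / S t) * Complex.exp (R t) :=
    Filter.eventuallyEq_of_mem (hU.mem_nhds hx) hderivLam
  have hinv : HasDerivAt (fun t => r / S t)
      ((0 * S x - r * deriv S x) / S x ^ 2) x :=
    (hasDerivAt_const x r).div (hSda x hx) hSx
  have hg : HasDerivAt (fun t => (deriv S t + r / S t) * Complex.exp (R t))
      ((deriv (deriv S) x + (0 * S x - r * deriv S x) / S x ^ 2) * Complex.exp (R x)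
        + (deriv S x + r / S x) * (Complex.exp (R x) * (r / Ξ x))) x :=
    ((hS'da x hx).add hinv).mul (hexp x hx)
  rw [hev.deriv_eq, hg.deriv, hΞx]
  -- final algebra
  have hex : Complex.exp (R x) ≠ 0 := Complex.exp_ne_zero _
  unfold Lam
  field_simp [hSx]
  linear_combination hQx + hr
end

section
/- With Λ(x) = √(Ξ(x))·exp(∫ √(-Q)/Ξ dx) as above and Ξ an even function, the Wronskian satisfies Λ(-x)·Λ'(x) - Λ(x)·(d/dx)[Λ(-x)] = Λ(x)·Λ(-x)·2√(-Q)/Ξ(x). In particular, if Q ≠ 0 then Λ(x) and Λ(-x) are linearly independent solutions of -f'' + v·f = E·f. -/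
open Complex

/-- With `Λ(x) = √(Ξ(x))·exp(∫ √(-Q)/Ξ dx)` and `Ξ` even, the Wronskian satisfies
`Λ(-x)·Λ'(x) - Λ(x)·(d/dx)[Λ(-x)] = Λ(x)·Λ(-x)·2√(-Q)/Ξ(x)`; in particular, if `Q ≠ 0`
then `Λ(x)` and `Λ(-x)` are linearly independent (solutions of `-f'' + v·f = E·f`). -/
theorem wronskian_identity_and_independence
    (U : Set ℂ) (hU : IsOpen U) (hUsc : SimplyConnectedSpace U)
    (hne : U.Nonempty) (hsym : ∀ x ∈ U, -x ∈ U)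
    (v Ξ S R : ℂ → ℂ) (E Q r : ℂ)
    (hv : DifferentiableOn ℂ v U) (hveven : ∀ x ∈ U, v (-x) = v x)
    (hΞ : DifferentiableOn ℂ Ξ U) (hΞeven : ∀ x ∈ U, Ξ (-x) = Ξ x)
    (hΞ0 : ∀ x ∈ U, Ξ x ≠ 0)
    (hode : ∀ x ∈ U,
      iteratedDeriv 3 Ξ x - 4 * (v x - E) * deriv Ξ x - 2 * deriv v x * Ξ x = 0)
    (hQ : ∀ x ∈ U,
      Ξ x ^ 2 * (E - v x) + (1/2) * Ξ x * iteratedDeriv 2 Ξ x - (1/4) * (deriv Ξ x) ^ 2 = Q)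
    (hr : r ^ 2 = -Q)
    (hS : DifferentiableOn ℂ S U) (hS2 : ∀ x ∈ U, S x ^ 2 = Ξ x)
    (hR : ∀ x ∈ U, HasDerivAt R (r / Ξ x) x) :
    (∀ x ∈ U,
      Lam S R (-x) * deriv (Lam S R) x - Lam S R x * deriv (fun t => Lam S R (-t)) x
        = Lam S R x * Lam S R (-x) * (2 * r / Ξ x))
    ∧ (Q ≠ 0 → LinearIndependent ℂ ![Lam S R, fun t => Lam S R (-t)]) := by
  have hdS : ∀ x ∈ U, DifferentiableAt ℂ S x := fun x hx =>
    hS.differentiableAt (hU.mem_nhds hx)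
  have hdΞ : ∀ x ∈ U, DifferentiableAt ℂ Ξ x := fun x hx =>
    hΞ.differentiableAt (hU.mem_nhds hx)
  have hS0 : ∀ x ∈ U, S x ≠ 0 := by
    intro x hx h
    exact hΞ0 x hx (by rw [← hS2 x hx, h]; ring)
  -- derivative of Ξ in terms of S
  have hΞ' : ∀ x ∈ U, deriv Ξ x = 2 * S x * deriv S x := by
    intro x hx
    have h1 : HasDerivAt (fun y => S y ^ 2) (2 * S x * deriv S x) x := by
      exact (by simpa [pow_one] using ((hdS x hx).hasDerivAt.pow 2) : HasDerivAt (S ^ 2) (2 * S x * deriv S x) x)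
    have h2 : Ξ =ᶠ[nhds x] (fun y => S y ^ 2) := by
      filter_upwards [hU.mem_nhds hx] with y hy using (hS2 y hy).symm
    rw [h2.deriv_eq, h1.deriv]
  -- deriv Ξ is odd
  have hΞodd : ∀ x ∈ U, deriv Ξ (-x) = - deriv Ξ x := by
    intro x hx
    have h1 : HasDerivAt (fun y => Ξ (-y)) (deriv Ξ (-x) * (-1)) x :=
      ((hdΞ (-x) (hsym x hx)).hasDerivAt).comp x (hasDerivAt_neg x)
    have h2 : (fun y => Ξ (-y)) =ᶠ[nhds x] Ξ := by
      filter_upwards [hU.mem_nhds hx] with y hy using hΞeven y hy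
    have h3 := h1.deriv
    rw [h2.deriv_eq] at h3
    linear_combination h3
  -- key algebraic identity
  have key : ∀ x ∈ U, S (-x) * deriv S x + S x * deriv S (-x) = 0 := by
    intro x hx
    have hx' := hsym x hx
    have h1 := hΞ' x hx
    have h2 := hΞ' (-x) hx'
    have h3 := hΞodd x hx
    have e1 := hS2 x hx
    have e2 := hS2 (-x) hx'
    have e3 := hΞeven x hx
    have hne0 : S x * S (-x) ≠ 0 := mul_ne_zero (hS0 x hx) (hS0 (-x) hx')
    have hmain : S x * S (-x) * (S (-x) * deriv S x + S x * deriv S (-x)) = 0 := by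
      linear_combination (S x * deriv S x) * e2 + (S (-x) * deriv S (-x)) * e1 +
        (S x * deriv S x) * e3 - (Ξ x / 2) * h1 - (Ξ x / 2) * h2 + (Ξ x / 2) * h3
    rcases mul_eq_zero.mp hmain with h | h
    · exact absurd h hne0
    · exact h
  -- derivative of Lam
  have hΛ' : ∀ x ∈ U, HasDerivAt (Lam S R)
      (deriv S x * Complex.exp (R x) + S x * (Complex.exp (R x) * (r / Ξ x))) x := by
    intro x hx
    exact (hdS x hx).hasDerivAt.mul ((hR x hx).cexp)
  have hΛneg' : ∀ x ∈ U, HasDerivAt (fun t => Lam S R (-t))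
      ((deriv S (-x) * Complex.exp (R (-x)) + S (-x) * (Complex.exp (R (-x)) * (r / Ξ (-x)))) * (-1)) x := by
    intro x hx
    exact (hΛ' (-x) (hsym x hx)).comp x (hasDerivAt_neg x)
  have hΛ0 : ∀ x ∈ U, Lam S R x ≠ 0 := fun x hx =>
    mul_ne_zero (hS0 x hx) (Complex.exp_ne_zero _)
  -- the Wronskian identity
  have part1 : ∀ x ∈ U,
      Lam S R (-x) * deriv (Lam S R) x - Lam S R x * deriv (fun t => Lam S R (-t)) x
        = Lam S R x * Lam S R (-x) * (2 * r / Ξ x) := by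
    intro x hx
    have hx' := hsym x hx
    rw [(hΛ' x hx).deriv, (hΛneg' x hx).deriv]
    have hk := key x hx
    have he := hΞeven x hx
    have hX := hΞ0 x hx
    simp only [Lam, he]
    field_simp
    linear_combination (Ξ x) * hk
  refine ⟨part1, ?_⟩
  intro hQ0
  have hr0 : r ≠ 0 := by
    intro h
    exact hQ0 (by simpa [h] using hr.symm)
  obtain ⟨x₀, hx₀⟩ := hne
  have hx₀' := hsym x₀ hx₀
  rw [LinearIndependent.pair_iff]
  intro s t hst
  -- value equation at x₀
  have eq1 : s * Lam S R x₀ + t * Lam S R (-x₀) = 0 := by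
    have := congrFun hst x₀
    simpa using this
  -- derivative equation at x₀
  set L' := deriv S x₀ * Complex.exp (R x₀) + S x₀ * (Complex.exp (R x₀) * (r / Ξ x₀)) with hL'
  set D := (deriv S (-x₀) * Complex.exp (R (-x₀)) + S (-x₀) * (Complex.exp (R (-x₀)) * (r / Ξ (-x₀)))) * (-1) with hD
  have hcomb : HasDerivAt (fun y => s * Lam S R y + t * Lam S R (-y)) (s * L' + t * D) x₀ :=
    ((hΛ' x₀ hx₀).const_mul s).add ((hΛneg' x₀ hx₀).const_mul t)
  have hfun : (fun y => s * Lam S R y + t * Lam S R (-y)) = fun _ => (0 : ℂ) := by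
    funext y
    have := congrFun hst y
    simpa using this
  rw [hfun] at hcomb
  have eq2 : s * L' + t * D = 0 := hcomb.unique (hasDerivAt_const x₀ 0)
  -- Wronskian value nonzero
  have hW : Lam S R (-x₀) * L' - Lam S R x₀ * D = Lam S R x₀ * Lam S R (-x₀) * (2 * r / Ξ x₀) := by
    have := part1 x₀ hx₀
    rwa [(hΛ' x₀ hx₀).deriv, (hΛneg' x₀ hx₀).deriv] at this
  have hWne : Lam S R (-x₀) * L' - Lam S R x₀ * D ≠ 0 := by
    rw [hW]
    exact mul_ne_zero (mul_ne_zero (hΛ0 x₀ hx₀) (hΛ0 (-x₀) hx₀'))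
      (div_ne_zero (mul_ne_zero two_ne_zero hr0) (hΞ0 x₀ hx₀))
  have ht : t = 0 := by
    have h : t * (Lam S R (-x₀) * L' - Lam S R x₀ * D) = 0 := by
      linear_combination L' * eq1 - Lam S R x₀ * eq2
    rcases mul_eq_zero.mp h with h | h
    · exact h
    · exact absurd h hWne
  have hs : s = 0 := by
    have h : s * (Lam S R (-x₀) * L' - Lam S R x₀ * D) = 0 := by
      linear_combination (- D) * eq1 + Lam S R (-x₀) * eq2
    rcases mul_eq_zero.mp h with h | h
    · exact h
    · exact absurd h hWne
  exact ⟨hs, ht⟩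
end

section
/- Let v be a meromorphic periodic potential and suppose Ξ(x,E) = ∑_{i=0}^g a_{g-i}(x)E^i (with a₀(x) ≡ 1) satisfies Ξ''' - 4(v-E)Ξ' - 2v'Ξ = 0 identically in E. Then the coefficients satisfy a_j''' - 4v·a_j' - 2v'·a_j + 4a_{j+1}' = 0 for 0 ≤ j ≤ g (with a_{g+1} := Q-term interpreted as 0 appropriately), and the operator A = ∑_{j=0}^g (a_j·(d/dx) - (1/2)a_j') · (-(d/dx)² + v)^{g-j} of order 2g+1 commutes with H = -(d/dx)² + v. -/
open Finset

/-- The Schrödinger operator `H = -(d/dx)² + v`. -/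
noncomputable def Hop (v : ℂ → ℂ) : (ℂ → ℂ) → (ℂ → ℂ) :=
  fun u x => -(deriv (deriv u) x) + v x * u x

/-- The odd-order operator `A = ∑_{j=0}^g (a_j·(d/dx) - (1/2)a_j')·H^{g-j}`. -/
noncomputable def Aop (v : ℂ → ℂ) (g : ℕ) (a : ℕ → ℂ → ℂ) : (ℂ → ℂ) → (ℂ → ℂ) :=
  fun u x => ∑ j ∈ Finset.range (g + 1),
    (a j x * deriv ((Hop v)^[g - j] u) x - (1/2) * deriv (a j) x * ((Hop v)^[g - j] u) x)

lemma Ediff {f : ℂ → ℂ} (hf : Differentiable ℂ f) : Differentiable ℂ (deriv f) :=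
  ((contDiff_infty_iff_deriv.mp hf.contDiff).2).differentiable (by simp)

lemma deriv_sum_fun (n : ℕ) (c : ℕ → ℂ → ℂ) (h : ∀ i, Differentiable ℂ (c i)) (E : ℂ) :
    deriv (fun t => ∑ i ∈ Finset.range n, c i t * E ^ i)
      = fun x => ∑ i ∈ Finset.range n, deriv (c i) x * E ^ i := by
  funext x
  rw [deriv_fun_sum (fun i _ => ((h i).differentiableAt).mul_const (E ^ i))]
  exact Finset.sum_congr rfl fun i _ => deriv_mul_const (h i).differentiableAt _

open Polynomial in
lemma coeff_ids (v : ℂ → ℂ) (g : ℕ) (a : ℕ → ℂ → ℂ)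
    (ha : ∀ j, Differentiable ℂ (a j))
    (hΞ : ∀ E x : ℂ,
      iteratedDeriv 3 (fun t => ∑ i ∈ Finset.range (g + 1), a (g - i) t * E ^ i) x
        - 4 * (v x - E) * deriv (fun t => ∑ i ∈ Finset.range (g + 1), a (g - i) t * E ^ i) x
        - 2 * deriv v x * (∑ i ∈ Finset.range (g + 1), a (g - i) x * E ^ i) = 0) :
    ∀ k : ℕ, k ≤ g → ∀ x : ℂ,
      (iteratedDeriv 3 (a (g - k)) x - 4 * v x * deriv (a (g - k)) x
          - 2 * deriv v x * a (g - k) x)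
        + (if 1 ≤ k then 4 * deriv (a (g - (k - 1))) x else 0) = 0 := by
  intro k hk x
  set c : ℕ → ℂ → ℂ := fun i => a (g - i) with hc
  have hci : ∀ i, Differentiable ℂ (c i) := fun i => ha _
  have hd1 : ∀ E : ℂ, deriv (fun t => ∑ i ∈ Finset.range (g + 1), c i t * E ^ i)
      = fun y => ∑ i ∈ Finset.range (g + 1), deriv (c i) y * E ^ i :=
    fun E => deriv_sum_fun _ _ hci E
  have hd3 : ∀ E : ℂ, iteratedDeriv 3 (fun t => ∑ i ∈ Finset.range (g + 1), c i t * E ^ i)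
      = fun y => ∑ i ∈ Finset.range (g + 1), iteratedDeriv 3 (c i) y * E ^ i := by
    intro E
    have e1 := deriv_sum_fun (g+1) _ hci E
    have e2 := deriv_sum_fun (g+1) _ (fun i => Ediff (hci i)) E
    have e3 := deriv_sum_fun (g+1) _ (fun i => Ediff (Ediff (hci i))) E
    simp only [iteratedDeriv_succ, iteratedDeriv_zero]
    rw [e1, e2, e3]
  -- build the polynomial
  set P : ℕ → ℂ := fun i => iteratedDeriv 3 (c i) x - 4 * v x * deriv (c i) x
      - 2 * deriv v x * c i x with hP
  set Q : ℕ → ℂ := fun i => 4 * deriv (c i) x with hQ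
  set p : Polynomial ℂ := (∑ i ∈ Finset.range (g + 1), Polynomial.C (P i) * X ^ i)
      + ∑ i ∈ Finset.range (g + 1), Polynomial.C (Q i) * X ^ (i + 1) with hp
  have hev : ∀ E : ℂ, p.eval E = 0 := by
    intro E
    have h0 := hΞ E x
    rw [hd1 E, hd3 E] at h0
    have : p.eval E = ∑ i ∈ Finset.range (g + 1), P i * E ^ i
        + ∑ i ∈ Finset.range (g + 1), Q i * E ^ (i + 1) := by
      simp [hp, Polynomial.eval_finset_sum]
    rw [this, ← h0]
    simp only [hP, hQ, hc, Finset.mul_sum]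
    rw [← Finset.sum_add_distrib, ← Finset.sum_sub_distrib, ← Finset.sum_sub_distrib]
    exact Finset.sum_congr rfl fun i _ => by ring
  have hp0 : p = 0 := Polynomial.funext (by simpa using hev)
  have hco := congrArg (fun q => Polynomial.coeff q k) hp0
  simp only [hp, Polynomial.coeff_add, Polynomial.finset_sum_coeff,
    Polynomial.coeff_C_mul, Polynomial.coeff_X_pow, Polynomial.coeff_zero,
    mul_ite, mul_one, mul_zero] at hco
  rw [Finset.sum_ite_eq (Finset.range (g+1)) k P] at hco
  have h2 : (∑ i ∈ Finset.range (g + 1), if k = i + 1 then Q i else 0)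
      = if 1 ≤ k then 4 * deriv (a (g - (k - 1))) x else 0 := by
    rcases Nat.eq_zero_or_pos k with h | h
    · subst h; simp
    · obtain ⟨m, rfl⟩ := Nat.exists_eq_add_of_lt h
      simp only [zero_add, add_left_inj]
      rw [Finset.sum_ite_eq (Finset.range (g+1)) m Q]
      have hm : m ∈ Finset.range (g+1) := by simp; omega
      simp [hm, hQ, hc]
  rw [h2] at hco
  have hkm : k ∈ Finset.range (g+1) := by simp; omega
  rw [if_pos hkm] at hco
  simp only [hP, hc] at hco
  linear_combination hco

noncomputable def Bf (b w : ℂ → ℂ) : ℂ → ℂ := fun x => b x * deriv w x - 1/2 * deriv b x * w x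

lemma Hop_diff {v u : ℂ → ℂ} (hv : Differentiable ℂ v) (hu : Differentiable ℂ u) :
    Differentiable ℂ (Hop v u) := by
  unfold Hop
  exact ((Ediff (Ediff hu)).neg).add (hv.mul hu)

lemma Bf_diff {b w : ℂ → ℂ} (hb : Differentiable ℂ b) (hw : Differentiable ℂ w) :
    Differentiable ℂ (Bf b w) := by
  unfold Bf
  exact (hb.mul (Ediff hw)).sub (((differentiable_const _).mul (Ediff hb)).mul hw)

lemma deriv_Hop {v u : ℂ → ℂ} (hv : Differentiable ℂ v) (hu : Differentiable ℂ u) :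
    deriv (Hop v u) = fun y => -(deriv (deriv (deriv u)) y) + (deriv v y * u y + v y * deriv u y) := by
  funext y
  unfold Hop
  rw [deriv_fun_add (f := fun x => -deriv (deriv u) x) (g := fun x => v x * u x) ((Ediff (Ediff hu)).neg y) ((hv.mul hu) y), deriv_fun_mul (hv y) (hu y), deriv.fun_neg]

lemma deriv_Bf {b w : ℂ → ℂ} (hb : Differentiable ℂ b) (hw : Differentiable ℂ w) :
    deriv (Bf b w) = fun y =>
      (deriv b y * deriv w y + b y * deriv (deriv w) y)
      - (1/2 * deriv (deriv b) y * w y + 1/2 * deriv b y * deriv w y) := by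
  funext y
  unfold Bf
  rw [deriv_fun_sub (f := fun x => b x * deriv w x) (g := fun x => 1/2 * deriv b x * w x) ((hb.mul (Ediff hw)) y) ((((differentiable_const _).mul (Ediff hb)).mul hw) y),
    deriv_fun_mul (hb y) ((Ediff hw) y),
    deriv_fun_mul (c := fun x => 1/2 * deriv b x) (((differentiable_const _).mul (Ediff hb)) y) (hw y),
    deriv_const_mul _ ((Ediff hb) y)]

lemma deriv2_Bf {b w : ℂ → ℂ} (hb : Differentiable ℂ b) (hw : Differentiable ℂ w) (x : ℂ) :
    deriv (deriv (Bf b w)) x =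
      (2 * deriv b x * deriv (deriv w) x + b x * deriv (deriv (deriv w)) x)
      - (1/2 * deriv (deriv (deriv b)) x * w x + 1/2 * deriv b x * deriv (deriv w) x) := by
  have hdb := Ediff hb; have hd2b := Ediff hdb
  have hdw := Ediff hw; have hd2w := Ediff hdw
  rw [deriv_Bf hb hw]
  have h1 : DifferentiableAt ℂ (fun y => deriv b y * deriv w y + b y * deriv (deriv w) y) x :=
    ((hdb.mul hdw).add (hb.mul hd2w)) x
  have h2 : DifferentiableAt ℂ
      (fun y => 1/2 * deriv (deriv b) y * w y + 1/2 * deriv b y * deriv w y) x :=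
    ((((differentiable_const _).mul hd2b).mul hw).add
      (((differentiable_const _).mul hdb).mul hdw)) x
  rw [deriv_fun_sub h1 h2,
    deriv_fun_add (f := fun y => deriv b y * deriv w y) (g := fun y => b y * deriv (deriv w) y) ((hdb.mul hdw) x) ((hb.mul hd2w) x),
    deriv_fun_mul (hdb x) (hdw x), deriv_fun_mul (hb x) (hd2w x),
    deriv_fun_add (f := fun y => 1/2 * deriv (deriv b) y * w y) (g := fun y => 1/2 * deriv b y * deriv w y) ((((differentiable_const _).mul hd2b).mul hw) x)
      ((((differentiable_const _).mul hdb).mul hdw) x),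
    deriv_fun_mul (c := fun y => 1/2 * deriv (deriv b) y) (((differentiable_const _).mul hd2b) x) (hw x),
    deriv_fun_mul (c := fun y => 1/2 * deriv b y) (((differentiable_const _).mul hdb) x) (hdw x),
    deriv_const_mul _ (hd2b x), deriv_const_mul _ (hdb x)]
  ring

lemma deriv_Bf_diff {b w : ℂ → ℂ} (hb : Differentiable ℂ b) (hw : Differentiable ℂ w) :
    Differentiable ℂ (deriv (Bf b w)) := by
  rw [deriv_Bf hb hw]
  exact (((Ediff hb).mul (Ediff hw)).add (hb.mul (Ediff (Ediff hw)))).sub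
    (((((differentiable_const _).mul (Ediff (Ediff hb))).mul hw)).add
      (((differentiable_const _).mul (Ediff hb)).mul (Ediff hw)))

lemma comm_one {v b u : ℂ → ℂ} (hv : Differentiable ℂ v) (hb : Differentiable ℂ b)
    (hu : Differentiable ℂ u) (x : ℂ) :
    Bf b (Hop v u) x - Hop v (Bf b u) x
      = -2 * deriv b x * Hop v u x
        + (2 * v x * deriv b x + deriv v x * b x - 1/2 * deriv (deriv (deriv b)) x) * u x := by
  have e1 : Bf b (Hop v u) x = b x * deriv (Hop v u) x - 1/2 * deriv b x * Hop v u x := rfl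
  have e2 : Hop v (Bf b u) x = -(deriv (deriv (Bf b u)) x) + v x * Bf b u x := rfl
  rw [e1, e2, deriv_Hop hv hu, deriv2_Bf hb hu]
  show b x * _ - 1/2 * deriv b x * (-(deriv (deriv u) x) + v x * u x) - _
    = -2 * deriv b x * (-(deriv (deriv u) x) + v x * u x) + _
  unfold Bf
  ring

/-- Suppose `Ξ(x,E) = ∑_{i=0}^g a_{g-i}(x)Eⁱ` (with `a₀ ≡ 1`) satisfies
`Ξ''' - 4(v-E)Ξ' - 2v'Ξ = 0` identically in `E`. Then the coefficients satisfy
`a_j''' - 4v·a_j' - 2v'·a_j + 4a_{j+1}' = 0`, and the operator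
`A = ∑_{j=0}^g (a_j·(d/dx) - (1/2)a_j')·H^{g-j}` of order `2g+1` commutes with
`H = -(d/dx)² + v`. -/
theorem commuting_operator_from_Xi
    (v : ℂ → ℂ) (g : ℕ) (a : ℕ → ℂ → ℂ)
    (hv : Differentiable ℂ v) (ha : ∀ j, Differentiable ℂ (a j))
    (ha0 : ∀ x, a 0 x = 1)
    (hΞ : ∀ E x : ℂ,
      iteratedDeriv 3 (fun t => ∑ i ∈ Finset.range (g + 1), a (g - i) t * E ^ i) x
        - 4 * (v x - E) * deriv (fun t => ∑ i ∈ Finset.range (g + 1), a (g - i) t * E ^ i) x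
        - 2 * deriv v x * (∑ i ∈ Finset.range (g + 1), a (g - i) x * E ^ i) = 0) :
    (∀ j : ℕ, j + 1 ≤ g → ∀ x : ℂ,
      iteratedDeriv 3 (a j) x - 4 * v x * deriv (a j) x - 2 * deriv v x * a j x
        + 4 * deriv (a (j + 1)) x = 0)
    ∧ ∀ f : ℂ → ℂ, Differentiable ℂ f → ∀ x : ℂ,
        Aop v g a (Hop v f) x = Hop v (Aop v g a f) x := by
  -- coefficient identities
  have key := coeff_ids v g a ha hΞ
  have part1 : ∀ j : ℕ, j + 1 ≤ g → ∀ x : ℂ,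
      iteratedDeriv 3 (a j) x - 4 * v x * deriv (a j) x - 2 * deriv v x * a j x
        + 4 * deriv (a (j + 1)) x = 0 := by
    intro j hj x
    have h := key (g - j) (Nat.sub_le _ _) x
    have e1 : g - (g - j) = j := Nat.sub_sub_self (by omega)
    have e2 : g - (g - j - 1) = j + 1 := by omega
    have e3 : 1 ≤ g - j := by omega
    rw [e1, if_pos e3, e2] at h
    linear_combination h
  have partg : ∀ x : ℂ,
      iteratedDeriv 3 (a g) x - 4 * v x * deriv (a g) x - 2 * deriv v x * a g x = 0 := by
    intro x
    have h := key 0 (Nat.zero_le _) x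
    simpa using h
  refine ⟨part1, ?_⟩
  intro f hf x
  have hdv := Ediff hv
  -- iterates are differentiable
  have hiter : ∀ n : ℕ, Differentiable ℂ ((Hop v)^[n] f) := by
    intro n
    induction n with
    | zero => exact hf
    | succ n ih => rw [Function.iterate_succ_apply']; exact Hop_diff hv ih
  set u : ℕ → ℂ → ℂ := fun j => (Hop v)^[g - j] f with hu
  have hud : ∀ j, Differentiable ℂ (u j) := fun j => hiter _
  -- LHS as a sum of Bf applied to Hop of iterates
  have hL : Aop v g a (Hop v f) x
      = ∑ j ∈ Finset.range (g + 1), Bf (a j) (Hop v (u j)) x := by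
    refine Finset.sum_congr rfl fun j _ => ?_
    have hit : (Hop v)^[g - j] (Hop v f) = Hop v (u j) := by
      rw [← Function.iterate_succ_apply, Function.iterate_succ_apply']
    rw [hit]; rfl
  -- RHS as a sum of Hop applied to Bf terms
  have hAf : Aop v g a f = fun y => ∑ j ∈ Finset.range (g + 1), Bf (a j) (u j) y := by
    funext y
    exact Finset.sum_congr rfl fun j _ => rfl
  have hd1A : deriv (Aop v g a f)
      = fun y => ∑ j ∈ Finset.range (g + 1), deriv (Bf (a j) (u j)) y := by
    rw [hAf]; funext y
    exact deriv_fun_sum fun j _ => (Bf_diff (ha j) (hud j)) y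
  have hd2A : deriv (deriv (Aop v g a f)) x
      = ∑ j ∈ Finset.range (g + 1), deriv (deriv (Bf (a j) (u j))) x := by
    rw [hd1A]
    exact deriv_fun_sum fun j _ => (deriv_Bf_diff (ha j) (hud j)) x
  have hR : Hop v (Aop v g a f) x
      = ∑ j ∈ Finset.range (g + 1), Hop v (Bf (a j) (u j)) x := by
    show -(deriv (deriv (Aop v g a f)) x) + v x * Aop v g a f x = _
    rw [hd2A, hAf]
    simp only [Finset.mul_sum, ← Finset.sum_neg_distrib]
    rw [← Finset.sum_add_distrib]
    exact Finset.sum_congr rfl fun j _ => rfl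
  rw [hL, hR, ← sub_eq_zero, ← Finset.sum_sub_distrib]
  have hterm : ∀ j ∈ Finset.range (g + 1),
      Bf (a j) (Hop v (u j)) x - Hop v (Bf (a j) (u j)) x
        = -2 * deriv (a j) x * Hop v (u j) x
          + (if j < g then 2 * deriv (a (j + 1)) x else 0) * u j x := by
    intro j hj
    rw [comm_one hv (ha j) (hud j) x]
    congr 1
    congr 1
    by_cases hjg : j < g
    · rw [if_pos hjg]
      have h3 : iteratedDeriv 3 (a j) x = deriv (deriv (deriv (a j))) x := by
        simp [iteratedDeriv_succ, iteratedDeriv_zero]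
      have := part1 j hjg x
      rw [h3] at this
      linear_combination -this / 2
    · rw [if_neg hjg]
      have hjg' : j = g := by simp at hj; omega
      rw [hjg']
      have := partg x
      have h3 : iteratedDeriv 3 (a g) x = deriv (deriv (deriv (a g))) x := by
        simp [iteratedDeriv_succ, iteratedDeriv_zero]
      rw [h3] at this
      linear_combination -this / 2
  rw [Finset.sum_congr rfl hterm, Finset.sum_add_distrib]
  -- second sum: drop the vanishing last term
  have hsum2 : ∑ j ∈ Finset.range (g + 1), (if j < g then 2 * deriv (a (j + 1)) x else 0) * u j x
      = ∑ j ∈ Finset.range g, 2 * deriv (a (j + 1)) x * u j x := by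
    rw [Finset.sum_range_succ, if_neg (lt_irrefl g)]
    simp only [zero_mul, add_zero]
    exact Finset.sum_congr rfl fun j hj => by
      rw [if_pos (Finset.mem_range.mp hj)]
  -- first sum: peel off j = 0 (whose coefficient vanishes) and shift
  have ha0' : deriv (a 0) = fun _ => (0 : ℂ) := by
    have : a 0 = fun _ => (1 : ℂ) := funext ha0
    rw [this]; funext y; exact deriv_const y 1
  have hsum1 : ∑ j ∈ Finset.range (g + 1), -2 * deriv (a j) x * Hop v (u j) x
      = ∑ j ∈ Finset.range g, -2 * deriv (a (j + 1)) x * u j x := by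
    rw [Finset.sum_range_succ']
    rw [ha0']
    simp only [mul_zero, neg_zero, zero_mul, mul_zero, add_zero]
    norm_num
    refine Finset.sum_congr rfl fun j hj => ?_
    have hjg : j < g := Finset.mem_range.mp hj
    have huc : Hop v (u (j + 1)) = u j := by
      have hn : g - j = (g - (j + 1)) + 1 := by omega
      show Hop v ((Hop v)^[g - (j + 1)] f) = (Hop v)^[g - j] f
      rw [hn, Function.iterate_succ_apply']
    rw [huc]
  rw [hsum1, hsum2, ← Finset.sum_add_distrib]
  refine Finset.sum_eq_zero fun j _ => by ring
end

section
/- Suppose Ξ(x,E) is as in the previous statement, A the associated operator of order 2g+1 commuting with H = -(d/dx)²+v, and Q(E) the monic polynomial of degree 2g+1 given by Q(E) = Ξ(x,E)²(E-v(x)) + (1/2)Ξ(x,E)∂ₓ²Ξ(x,E) - (1/4)(∂ₓΞ(x,E))². Then A² + Q(H) = 0 as differential operators. -/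
open Finset

namespace ASQ

/-- derivative of an entire function is entire -/
lemma entD {u : ℂ → ℂ} (hu : Differentiable ℂ u) : Differentiable ℂ (deriv u) := by
  have h : AnalyticOnNhd ℂ u Set.univ := hu.differentiableOn.analyticOnNhd isOpen_univ
  exact fun x => (h.deriv x (Set.mem_univ x)).differentiableAt

lemma entH {v u : ℂ → ℂ} (hv : Differentiable ℂ v) (hu : Differentiable ℂ u) :
    Differentiable ℂ (Hop v u) := by
  unfold Hop
  exact ((entD (entD hu)).neg).add (hv.mul hu)

lemma entHk {v u : ℂ → ℂ} (hv : Differentiable ℂ v) (hu : Differentiable ℂ u) (k : ℕ) :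
    Differentiable ℂ ((Hop v)^[k] u) := by
  induction k with
  | zero => exact hu
  | succ k ih => rw [Function.iterate_succ_apply']; exact entH hv ih

/-- first order operator with coefficient family b -/
noncomputable def Sb (b : ℕ → ℂ → ℂ) (i : ℕ) (u : ℂ → ℂ) : ℂ → ℂ :=
  fun x => b i x * deriv u x - (1/2) * deriv (b i) x * u x

lemma entS {b : ℕ → ℂ → ℂ} (hb : ∀ i, Differentiable ℂ (b i)) {u : ℂ → ℂ}
    (hu : Differentiable ℂ u) (i : ℕ) : Differentiable ℂ (Sb b i u) := by
  unfold Sb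
  exact ((hb i).mul (entD hu)).sub (((differentiable_const _).mul (entD (hb i))).mul hu)

/-- function-level derivative lemmas -/
lemma dF_mul {p r : ℂ → ℂ} (hp : Differentiable ℂ p) (hr : Differentiable ℂ r) :
    deriv (fun y => p y * r y) = fun y => deriv p y * r y + p y * deriv r y :=
  funext fun y => deriv_mul (hp y) (hr y)

lemma dF_sub {p r : ℂ → ℂ} (hp : Differentiable ℂ p) (hr : Differentiable ℂ r) :
    deriv (fun y => p y - r y) = fun y => deriv p y - deriv r y :=
  funext fun y => deriv_sub (hp y) (hr y)

lemma dF_add {p r : ℂ → ℂ} (hp : Differentiable ℂ p) (hr : Differentiable ℂ r) :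
    deriv (fun y => p y + r y) = fun y => deriv p y + deriv r y :=
  funext fun y => deriv_add (hp y) (hr y)

lemma dF_cmul (c : ℂ) {p : ℂ → ℂ} (hp : Differentiable ℂ p) :
    deriv (fun y => c * p y) = fun y => c * deriv p y :=
  funext fun y => deriv_const_mul c (hp y)

lemma dF_neg {p : ℂ → ℂ} :
    deriv (fun y => -(p y)) = fun y => -(deriv p y) :=
  funext fun y => deriv.neg

lemma dF_sum_mul {m : ℕ} {c : ℕ → ℂ → ℂ} (hc : ∀ i, Differentiable ℂ (c i)) (e : ℕ → ℂ) :
    deriv (fun x => ∑ i ∈ range m, c i x * e i) = fun x => ∑ i ∈ range m, deriv (c i) x * e i := by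
  funext x
  rw [deriv_fun_sum (fun i _ => ((hc i).differentiableAt).mul_const (e i))]
  exact Finset.sum_congr rfl fun i _ => deriv_mul_const ((hc i) x) (e i)

lemma ent_sum_mul {m : ℕ} {c : ℕ → ℂ → ℂ} (hc : ∀ i, Differentiable ℂ (c i)) (e : ℕ → ℂ) :
    Differentiable ℂ (fun x => ∑ i ∈ range m, c i x * e i) :=
  Differentiable.fun_sum (fun i _ => (hc i).mul_const (e i))

/-- coefficient extraction -/
lemma coeff_zero {n : ℕ} {c : ℕ → ℂ} (h : ∀ E : ℂ, ∑ k ∈ range n, c k * E ^ k = 0) :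
    ∀ k < n, c k = 0 := by
  intro k hk
  have hp : (∑ j ∈ range n, Polynomial.C (c j) * Polynomial.X ^ j : Polynomial ℂ) = 0 := by
    apply Polynomial.funext
    intro r
    simp only [Polynomial.eval_finset_sum, Polynomial.eval_mul, Polynomial.eval_C,
      Polynomial.eval_pow, Polynomial.eval_X, Polynomial.eval_zero]
    exact h r
  have h2 := congrArg (fun p => Polynomial.coeff p k) hp
  simpa [Polynomial.finset_sum_coeff, Polynomial.coeff_C_mul, Polynomial.coeff_X_pow,
    Finset.sum_ite_eq, hk] using h2


noncomputable def Xi (n : ℕ) (b : ℕ → ℂ → ℂ) (E : ℂ) : ℂ → ℂ :=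
  fun x => ∑ i ∈ range (n + 1), b i x * E ^ i

noncomputable def SEf (n : ℕ) (b : ℕ → ℂ → ℂ) (E : ℂ) (u : ℂ → ℂ) : ℂ → ℂ :=
  fun x => Xi n b E x * deriv u x - (1/2) * deriv (Xi n b E) x * u x

variable {v : ℂ → ℂ} {n : ℕ} {b : ℕ → ℂ → ℂ}

lemma entXi (hb : ∀ i, Differentiable ℂ (b i)) (E : ℂ) : Differentiable ℂ (Xi n b E) :=
  ent_sum_mul hb _

lemma dXi (hb : ∀ i, Differentiable ℂ (b i)) (E : ℂ) :
    deriv (Xi n b E) = fun x => ∑ i ∈ range (n + 1), deriv (b i) x * E ^ i :=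
  dF_sum_mul hb _

lemma entSEf (hb : ∀ i, Differentiable ℂ (b i)) {u : ℂ → ℂ} (hu : Differentiable ℂ u) (E : ℂ) :
    Differentiable ℂ (SEf n b E u) := by
  unfold SEf
  exact ((entXi hb E).mul (entD hu)).sub
    (((differentiable_const _).mul (entD (entXi hb E))).mul hu)

lemma dSEf (hb : ∀ i, Differentiable ℂ (b i)) {u : ℂ → ℂ} (hu : Differentiable ℂ u) (E : ℂ) :
    deriv (SEf n b E u) = fun y =>
      (deriv (Xi n b E) y * deriv u y + Xi n b E y * deriv (deriv u) y)
      - (((1/2) * deriv (deriv (Xi n b E)) y) * u y + ((1/2) * deriv (Xi n b E) y) * deriv u y) := by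
  have hΦ : Differentiable ℂ (Xi n b E) := entXi hb E
  unfold SEf
  rw [dF_sub (hΦ.fun_mul (entD hu)) (((differentiable_const _).fun_mul (entD hΦ)).fun_mul hu),
    dF_mul hΦ (entD hu), dF_mul ((differentiable_const _).fun_mul (entD hΦ)) hu,
    dF_cmul _ (entD hΦ)]

lemma dHop (hv : Differentiable ℂ v) {u : ℂ → ℂ} (hu : Differentiable ℂ u) :
    deriv (Hop v u) = fun y =>
      -(deriv (deriv (deriv u)) y) + (deriv v y * u y + v y * deriv u y) := by
  have h : Hop v u = fun y => -(deriv (deriv u) y) + v y * u y := rfl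
  rw [h, dF_add ((entD (entD hu)).fun_neg) (hv.fun_mul hu), dF_neg, dF_mul hv hu]

/-- The key second-order identity: S_E² + Q(E) = -Ξ²(H - E), pointwise. -/
lemma star {q : ℕ → ℂ} (hv : Differentiable ℂ v) (hb : ∀ i, Differentiable ℂ (b i))
    (hQ' : ∀ E x : ℂ, ∑ k ∈ range (2 * n + 2), q k * E ^ k
      = (Xi n b E x) ^ 2 * (E - v x)
        + (1/2) * Xi n b E x * deriv (deriv (Xi n b E)) x
        - (1/4) * (deriv (Xi n b E) x) ^ 2)
    {u : ℂ → ℂ} (hu : Differentiable ℂ u) (E x : ℂ) :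
    SEf n b E (SEf n b E u) x + (∑ k ∈ range (2 * n + 2), q k * E ^ k) * u x
      = -((Xi n b E x) ^ 2) * (Hop v u x - E * u x) := by
  have h1 : SEf n b E (SEf n b E u) x
      = Xi n b E x * deriv (SEf n b E u) x - (1/2) * deriv (Xi n b E) x * SEf n b E u x := rfl
  rw [h1, congrFun (dSEf hb hu E) x, hQ' E x]
  show _ = -((Xi n b E x) ^ 2) * ((-(deriv (deriv u) x) + v x * u x) - E * u x)
  unfold SEf
  ring

/-- The commutator identity: [H, S_E] = 2Ξ'(H - E), pointwise (uses the Ξ equation). -/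
lemma comm_gen (hv : Differentiable ℂ v) (hb : ∀ i, Differentiable ℂ (b i))
    (hΞ' : ∀ E x : ℂ, deriv (deriv (deriv (Xi n b E))) x
        - 4 * (v x - E) * deriv (Xi n b E) x - 2 * deriv v x * Xi n b E x = 0)
    {u : ℂ → ℂ} (hu : Differentiable ℂ u) (E x : ℂ) :
    Hop v (SEf n b E u) x - SEf n b E (Hop v u) x
      = 2 * deriv (Xi n b E) x * (Hop v u x - E * u x) := by
  have hΦ : Differentiable ℂ (Xi n b E) := entXi hb E
  have hdd : deriv (deriv (SEf n b E u)) = fun y =>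
      ((deriv (deriv (Xi n b E)) y * deriv u y + deriv (Xi n b E) y * deriv (deriv u) y)
        + (deriv (Xi n b E) y * deriv (deriv u) y + Xi n b E y * deriv (deriv (deriv u)) y))
      - ((((1/2) * deriv (deriv (deriv (Xi n b E))) y) * u y
            + ((1/2) * deriv (deriv (Xi n b E)) y) * deriv u y)
        + (((1/2) * deriv (deriv (Xi n b E)) y) * deriv u y
            + ((1/2) * deriv (Xi n b E) y) * deriv (deriv u) y)) := by
    rw [dSEf hb hu E]
    rw [dF_sub (((entD hΦ).fun_mul (entD hu)).fun_add (hΦ.fun_mul (entD (entD hu))))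
        ((((differentiable_const _).fun_mul (entD (entD hΦ))).fun_mul hu).fun_add
          (((differentiable_const _).fun_mul (entD hΦ)).fun_mul (entD hu)))]
    rw [dF_add ((entD hΦ).fun_mul (entD hu)) (hΦ.fun_mul (entD (entD hu)))]
    rw [dF_mul (entD hΦ) (entD hu), dF_mul hΦ (entD (entD hu))]
    rw [dF_add (((differentiable_const _).fun_mul (entD (entD hΦ))).fun_mul hu)
        (((differentiable_const _).fun_mul (entD hΦ)).fun_mul (entD hu))]
    rw [dF_mul ((differentiable_const _).fun_mul (entD (entD hΦ))) hu,
        dF_mul ((differentiable_const _).fun_mul (entD hΦ)) (entD hu),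
        dF_cmul _ (entD (entD hΦ)), dF_cmul _ (entD hΦ)]
  have h2 : Hop v (SEf n b E u) x
      = -(deriv (deriv (SEf n b E u)) x) + v x * SEf n b E u x := rfl
  have h3 : SEf n b E (Hop v u) x
      = Xi n b E x * deriv (Hop v u) x - (1/2) * deriv (Xi n b E) x * Hop v u x := rfl
  rw [h2, h3, congrFun hdd x, congrFun (dHop hv hu) x]
  show _ - _ = 2 * deriv (Xi n b E) x * ((-(deriv (deriv u) x) + v x * u x) - E * u x)
  have h4 : Hop v u x = -(deriv (deriv u) x) + v x * u x := rfl
  unfold SEf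
  rw [h4]
  linear_combination (u x / 2 : ℂ) * hΞ' E x



lemma Sb_sum_mul (hb : ∀ i, Differentiable ℂ (b i)) {m : ℕ} {w : ℕ → ℂ → ℂ}
    (hw : ∀ j, Differentiable ℂ (w j)) (e : ℕ → ℂ) (i : ℕ) (x : ℂ) :
    Sb b i (fun y => ∑ j ∈ range m, w j y * e j) x = ∑ j ∈ range m, Sb b i (w j) x * e j := by
  unfold Sb
  rw [congrFun (dF_sum_mul hw e) x, Finset.mul_sum, Finset.mul_sum, ← Finset.sum_sub_distrib]
  exact Finset.sum_congr rfl fun j _ => by ring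

lemma Sb_sum (hb : ∀ i, Differentiable ℂ (b i)) {m : ℕ} {w : ℕ → ℂ → ℂ}
    (hw : ∀ j, Differentiable ℂ (w j)) (i : ℕ) (x : ℂ) :
    Sb b i (fun y => ∑ j ∈ range m, w j y) x = ∑ j ∈ range m, Sb b i (w j) x := by
  unfold Sb
  rw [deriv_fun_sum (fun j _ => (hw j).differentiableAt), Finset.mul_sum, Finset.mul_sum,
    ← Finset.sum_sub_distrib]

lemma Hop_sum_mul {m : ℕ} {w : ℕ → ℂ → ℂ} (hw : ∀ j, Differentiable ℂ (w j)) (e : ℕ → ℂ) (x : ℂ) :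
    Hop v (fun y => ∑ j ∈ range m, w j y * e j) x = ∑ j ∈ range m, Hop v (w j) x * e j := by
  have h1 : deriv (deriv (fun y => ∑ j ∈ range m, w j y * e j))
      = fun y => ∑ j ∈ range m, deriv (deriv (w j)) y * e j := by
    rw [dF_sum_mul hw e, dF_sum_mul (fun j => entD (hw j)) e]
  show -(deriv (deriv (fun y => ∑ j ∈ range m, w j y * e j)) x) + v x * _ = _
  rw [h1, Finset.mul_sum, ← Finset.sum_neg_distrib, ← Finset.sum_add_distrib]
  exact Finset.sum_congr rfl fun j _ => by show _ = (-(deriv (deriv (w j)) x) + v x * w j x) * e j; ring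

lemma SEf_eq_sum (hb : ∀ i, Differentiable ℂ (b i)) {u : ℂ → ℂ} (hu : Differentiable ℂ u)
    (E x : ℂ) : SEf n b E u x = ∑ i ∈ range (n + 1), Sb b i u x * E ^ i := by
  unfold SEf Sb
  rw [congrFun (dXi hb E) x]
  show (∑ i ∈ range (n + 1), b i x * E ^ i) * deriv u x
      - 1/2 * (∑ i ∈ range (n + 1), deriv (b i) x * E ^ i) * u x = _
  rw [Finset.sum_mul, Finset.mul_sum, Finset.sum_mul, ← Finset.sum_sub_distrib]
  exact Finset.sum_congr rfl fun i _ => by ring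

/-- coefficient-wise commutator identity -/
lemma commS (hv : Differentiable ℂ v) (hb : ∀ i, Differentiable ℂ (b i))
    (hΞ' : ∀ E x : ℂ, deriv (deriv (deriv (Xi n b E))) x
        - 4 * (v x - E) * deriv (Xi n b E) x - 2 * deriv v x * Xi n b E x = 0)
    {u : ℂ → ℂ} (hu : Differentiable ℂ u) (x : ℂ) :
    ∀ i < n + 1,
      (Hop v (Sb b i u) x - Sb b i (Hop v u) x - 2 * deriv (b i) x * Hop v u x)
        + (if i = 0 then 0 else 2 * deriv (b (i - 1)) x * u x) = 0 := by
  set X : ℕ → ℂ := fun k => Hop v (Sb b k u) x - Sb b k (Hop v u) x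
      - 2 * deriv (b k) x * Hop v u x with hX
  set Z : ℕ → ℂ := fun k => 2 * deriv (b k) x * u x with hZ
  have key : ∀ E : ℂ, ∑ k ∈ range (n + 2),
      ((if k < n + 1 then X k else 0) + (if k = 0 then 0 else Z (k - 1))) * E ^ k = 0 := by
    intro E
    have hsplit : ∑ k ∈ range (n + 2),
        ((if k < n + 1 then X k else 0) + (if k = 0 then 0 else Z (k - 1))) * E ^ k
        = (∑ k ∈ range (n + 1), X k * E ^ k) + ∑ k ∈ range (n + 1), Z k * E ^ (k + 1) := by
      simp only [add_mul, ite_mul, zero_mul, Finset.sum_add_distrib]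
      congr 1
      · rw [Finset.sum_range_succ, if_neg (lt_irrefl (n + 1)), add_zero]
        exact Finset.sum_congr rfl fun k hk => if_pos (mem_range.mp hk)
      · rw [Finset.sum_range_succ']
        simp [Nat.succ_ne_zero, Nat.add_sub_cancel]
    have hdx : deriv (Xi n b E) x = ∑ k ∈ range (n + 1), deriv (b k) x * E ^ k :=
      congrFun (dXi hb E) x
    have hA : ∑ k ∈ range (n + 1), Hop v (Sb b k u) x * E ^ k = Hop v (SEf n b E u) x := by
      have hfe : SEf n b E u = fun y => ∑ k ∈ range (n + 1), Sb b k u y * E ^ k :=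
        funext fun y => SEf_eq_sum hb hu E y
      rw [hfe, Hop_sum_mul (fun k => entS hb hu k) _ x]
    have h1 : ∑ k ∈ range (n + 1), X k * E ^ k
        = Hop v (SEf n b E u) x - SEf n b E (Hop v u) x
          - 2 * deriv (Xi n b E) x * Hop v u x := by
      simp only [hX, sub_mul, Finset.sum_sub_distrib]
      rw [hA, ← SEf_eq_sum hb (entH hv hu) E x]
      congr 1
      rw [hdx, Finset.mul_sum, Finset.sum_mul]
      exact Finset.sum_congr rfl fun k _ => by ring
    have h2 : ∑ k ∈ range (n + 1), Z k * E ^ (k + 1)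
        = 2 * deriv (Xi n b E) x * u x * E := by
      simp only [hZ]
      rw [hdx, Finset.mul_sum, Finset.sum_mul, Finset.sum_mul]
      exact Finset.sum_congr rfl fun k _ => by rw [pow_succ]; ring
    rw [hsplit, h1, h2]
    linear_combination comm_gen hv hb hΞ' hu E x
  intro i hi
  have hc := coeff_zero key i (by omega)
  rwa [if_pos hi] at hc


lemma swap_pow {M N : ℕ} (F : ℕ → ℕ → ℂ) (d : ℕ → ℕ → ℕ)
    (hd : ∀ i ∈ range N, ∀ j ∈ range N, d i j < M) (E : ℂ) :
    ∑ m ∈ range M, (∑ i ∈ range N, ∑ j ∈ range N, if d i j = m then F i j else 0) * E ^ m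
      = ∑ i ∈ range N, ∑ j ∈ range N, F i j * E ^ (d i j) := by
  have h : ∀ m ∈ range M, (∑ i ∈ range N, ∑ j ∈ range N, if d i j = m then F i j else 0) * E ^ m
      = ∑ i ∈ range N, ∑ j ∈ range N, (if d i j = m then F i j * E ^ m else 0) := by
    intro m _
    rw [Finset.sum_mul]
    exact Finset.sum_congr rfl fun i _ => by
      rw [Finset.sum_mul]
      exact Finset.sum_congr rfl fun j _ => by rw [ite_mul, zero_mul]
  rw [Finset.sum_congr rfl h, Finset.sum_comm]
  refine Finset.sum_congr rfl fun i hi => ?_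
  rw [Finset.sum_comm]
  refine Finset.sum_congr rfl fun j hj => ?_
  rw [Finset.sum_ite_eq (range M) (d i j) (fun m => F i j * E ^ m),
    if_pos (mem_range.mpr (hd i hi j hj))]

lemma swap_val {M N : ℕ} (F : ℕ → ℕ → ℕ → ℂ) (d : ℕ → ℕ → ℕ)
    (hd : ∀ i ∈ range N, ∀ j ∈ range N, d i j < M) :
    ∑ m ∈ range M, ∑ i ∈ range N, ∑ j ∈ range N, (if d i j = m then F i j m else 0)
      = ∑ i ∈ range N, ∑ j ∈ range N, F i j (d i j) := by
  rw [Finset.sum_comm]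
  refine Finset.sum_congr rfl fun i hi => ?_
  rw [Finset.sum_comm]
  refine Finset.sum_congr rfl fun j hj => ?_
  rw [Finset.sum_ite_eq (range M) (d i j) (fun m => F i j m),
    if_pos (mem_range.mpr (hd i hi j hj))]

/-- coefficient-wise square identity -/
lemma squareS {q : ℕ → ℂ} (hv : Differentiable ℂ v) (hb : ∀ i, Differentiable ℂ (b i))
    (hQ' : ∀ E x : ℂ, ∑ k ∈ range (2 * n + 2), q k * E ^ k
      = (Xi n b E x) ^ 2 * (E - v x)
        + (1/2) * Xi n b E x * deriv (deriv (Xi n b E)) x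
        - (1/4) * (deriv (Xi n b E) x) ^ 2)
    {u : ℂ → ℂ} (hu : Differentiable ℂ u) (x : ℂ) :
    ∀ m < 2 * n + 2,
      (∑ i ∈ range (n + 1), ∑ j ∈ range (n + 1),
          if i + j = m then Sb b i (Sb b j u) x else 0)
        + q m * u x
        + (∑ i ∈ range (n + 1), ∑ j ∈ range (n + 1),
            if i + j = m then b i x * b j x else 0) * Hop v u x
        - (∑ i ∈ range (n + 1), ∑ j ∈ range (n + 1),
            if i + j + 1 = m then b i x * b j x else 0) * u x = 0 := by
  have key : ∀ E : ℂ, ∑ m ∈ range (2 * n + 2),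
      ((∑ i ∈ range (n + 1), ∑ j ∈ range (n + 1),
          if i + j = m then Sb b i (Sb b j u) x else 0)
        + q m * u x
        + (∑ i ∈ range (n + 1), ∑ j ∈ range (n + 1),
            if i + j = m then b i x * b j x else 0) * Hop v u x
        - (∑ i ∈ range (n + 1), ∑ j ∈ range (n + 1),
            if i + j + 1 = m then b i x * b j x else 0) * u x) * E ^ m = 0 := by
    intro E
    have hd1 : ∀ i ∈ range (n + 1), ∀ j ∈ range (n + 1), i + j < 2 * n + 2 := by
      intro i hi j hj; rw [mem_range] at hi hj; omega
    have hd2 : ∀ i ∈ range (n + 1), ∀ j ∈ range (n + 1), i + j + 1 < 2 * n + 2 := by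
      intro i hi j hj; rw [mem_range] at hi hj; omega
    have e1 : SEf n b E (SEf n b E u) x
        = ∑ i ∈ range (n + 1), ∑ j ∈ range (n + 1), Sb b i (Sb b j u) x * E ^ (i + j) := by
      rw [SEf_eq_sum hb (entSEf hb hu E) E x]
      refine Finset.sum_congr rfl fun i _ => ?_
      have hfe : SEf n b E u = fun y => ∑ j ∈ range (n + 1), Sb b j u y * E ^ j :=
        funext fun y => SEf_eq_sum hb hu E y
      rw [hfe, Sb_sum_mul hb (fun j => entS hb hu j) _ i x, Finset.sum_mul]
      exact Finset.sum_congr rfl fun j _ => by rw [pow_add]; ring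
    have e2 : (Xi n b E x) ^ 2
        = ∑ i ∈ range (n + 1), ∑ j ∈ range (n + 1), (b i x * b j x) * E ^ (i + j) := by
      rw [sq]
      show (∑ i ∈ range (n + 1), b i x * E ^ i) * (∑ j ∈ range (n + 1), b j x * E ^ j) = _
      rw [Finset.sum_mul_sum]
      exact Finset.sum_congr rfl fun i _ => Finset.sum_congr rfl fun j _ => by
        rw [pow_add]; ring
    have hexp : ∑ m ∈ range (2 * n + 2),
        ((∑ i ∈ range (n + 1), ∑ j ∈ range (n + 1),
            if i + j = m then Sb b i (Sb b j u) x else 0)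
          + q m * u x
          + (∑ i ∈ range (n + 1), ∑ j ∈ range (n + 1),
              if i + j = m then b i x * b j x else 0) * Hop v u x
          - (∑ i ∈ range (n + 1), ∑ j ∈ range (n + 1),
              if i + j + 1 = m then b i x * b j x else 0) * u x) * E ^ m
        = SEf n b E (SEf n b E u) x + (∑ k ∈ range (2 * n + 2), q k * E ^ k) * u x
          + (Xi n b E x) ^ 2 * Hop v u x - E * ((Xi n b E x) ^ 2) * u x := by
      simp only [add_mul, sub_mul, Finset.sum_add_distrib, Finset.sum_sub_distrib]
      congr 1
      · congr 1
        · congr 1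
          · rw [swap_pow _ _ hd1 E, e1]
          · rw [Finset.sum_mul]
            exact Finset.sum_congr rfl fun m _ => by ring
        · rw [e2]
          have : ∀ m ∈ range (2 * n + 2),
              (∑ i ∈ range (n + 1), ∑ j ∈ range (n + 1),
                if i + j = m then b i x * b j x else 0) * Hop v u x * E ^ m
              = (∑ i ∈ range (n + 1), ∑ j ∈ range (n + 1),
                if i + j = m then b i x * b j x else 0) * E ^ m * Hop v u x := by
            intro m _; ring
          rw [Finset.sum_congr rfl this, ← Finset.sum_mul, swap_pow _ _ hd1 E]
      · have : ∀ m ∈ range (2 * n + 2),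
            (∑ i ∈ range (n + 1), ∑ j ∈ range (n + 1),
              if i + j + 1 = m then b i x * b j x else 0) * u x * E ^ m
            = (∑ i ∈ range (n + 1), ∑ j ∈ range (n + 1),
              if i + j + 1 = m then b i x * b j x else 0) * E ^ m * u x := by
          intro m _; ring
        rw [Finset.sum_congr rfl this, ← Finset.sum_mul, swap_pow _ _ hd2 E, e2]
        simp only [Finset.sum_mul, Finset.mul_sum]
        refine Finset.sum_congr rfl fun i _ => Finset.sum_congr rfl fun j _ => ?_
        rw [pow_succ]
        ring
    rw [hexp]
    linear_combination star hv hb hQ' hu E x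
  intro m hm
  exact coeff_zero key m hm

lemma dF_sum {m : ℕ} {w : ℕ → ℂ → ℂ} (hw : ∀ j, Differentiable ℂ (w j)) :
    deriv (fun y => ∑ j ∈ range m, w j y) = fun y => ∑ j ∈ range m, deriv (w j) y :=
  funext fun y => deriv_fun_sum fun j _ => (hw j).differentiableAt

lemma Hop_sum {m : ℕ} {w : ℕ → ℂ → ℂ} (hw : ∀ j, Differentiable ℂ (w j)) (x : ℂ) :
    Hop v (fun y => ∑ j ∈ range m, w j y) x = ∑ j ∈ range m, Hop v (w j) x := by
  have h1 : deriv (deriv (fun y => ∑ j ∈ range m, w j y))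
      = fun y => ∑ j ∈ range m, deriv (deriv (w j)) y := by
    rw [dF_sum hw, dF_sum (fun j => entD (hw j))]
  show -(deriv (deriv (fun y => ∑ j ∈ range m, w j y)) x) + v x * _ = _
  rw [h1, Finset.mul_sum, ← Finset.sum_neg_distrib, ← Finset.sum_add_distrib]
  exact Finset.sum_congr rfl fun j _ => rfl

noncomputable def Ab (v : ℂ → ℂ) (n : ℕ) (b : ℕ → ℂ → ℂ) (u : ℂ → ℂ) : ℂ → ℂ :=
  fun x => ∑ i ∈ range (n + 1), Sb b i ((Hop v)^[i] u) x

lemma entAb (hv : Differentiable ℂ v) (hb : ∀ i, Differentiable ℂ (b i))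
    {u : ℂ → ℂ} (hu : Differentiable ℂ u) : Differentiable ℂ (Ab v n b u) :=
  Differentiable.fun_sum fun i _ => entS hb (entHk hv hu i) i

lemma commA (hv : Differentiable ℂ v) (hb : ∀ i, Differentiable ℂ (b i))
    (hΞ' : ∀ E x : ℂ, deriv (deriv (deriv (Xi n b E))) x
        - 4 * (v x - E) * deriv (Xi n b E) x - 2 * deriv v x * Xi n b E x = 0)
    (hbn : ∀ y, deriv (b n) y = 0)
    {f : ℂ → ℂ} (hf : Differentiable ℂ f) (x : ℂ) :
    Hop v (Ab v n b f) x = Ab v n b (Hop v f) x := by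
  have hAb : Ab v n b f = fun y => ∑ i ∈ range (n + 1), Sb b i ((Hop v)^[i] f) y := rfl
  have h1 : Hop v (Ab v n b f) x = ∑ i ∈ range (n + 1), Hop v (Sb b i ((Hop v)^[i] f)) x := by
    rw [hAb, Hop_sum (fun i => entS hb (entHk hv hf i) i) x]
  have h2 : ∀ i ∈ range (n + 1), Hop v (Sb b i ((Hop v)^[i] f)) x
      = Sb b i ((Hop v)^[i] (Hop v f)) x
        + (2 * deriv (b i) x * ((Hop v)^[i] (Hop v f)) x
          - (if i = 0 then 0 else 2 * deriv (b (i - 1)) x * ((Hop v)^[i] f) x)) := by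
    intro i hi
    have hc := commS hv hb hΞ' (entHk hv hf i) x i (mem_range.mp hi)
    have e1 : Hop v ((Hop v)^[i] f) = (Hop v)^[i + 1] f :=
      (Function.iterate_succ_apply' (Hop v) i f).symm
    have e2 : (Hop v)^[i + 1] f = (Hop v)^[i] (Hop v f) := Function.iterate_succ_apply (Hop v) i f
    rw [e1, e2] at hc
    linear_combination hc
  rw [h1, Finset.sum_congr rfl h2, Finset.sum_add_distrib]
  have h3 : ∑ i ∈ range (n + 1),
      (2 * deriv (b i) x * ((Hop v)^[i] (Hop v f)) x
        - (if i = 0 then 0 else 2 * deriv (b (i - 1)) x * ((Hop v)^[i] f) x)) = 0 := by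
    rw [Finset.sum_sub_distrib, Finset.sum_range_succ, hbn x, Finset.sum_range_succ']
    simp [Function.iterate_succ_apply]
  rw [h3, add_zero]
  rfl

lemma commAk (hv : Differentiable ℂ v) (hb : ∀ i, Differentiable ℂ (b i))
    (hΞ' : ∀ E x : ℂ, deriv (deriv (deriv (Xi n b E))) x
        - 4 * (v x - E) * deriv (Xi n b E) x - 2 * deriv v x * Xi n b E x = 0)
    (hbn : ∀ y, deriv (b n) y = 0)
    {f : ℂ → ℂ} (hf : Differentiable ℂ f) (k : ℕ) :
    (Hop v)^[k] (Ab v n b f) = Ab v n b ((Hop v)^[k] f) := by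
  induction k generalizing f with
  | zero => rfl
  | succ k ih =>
    rw [Function.iterate_succ_apply, show Hop v (Ab v n b f) = Ab v n b (Hop v f) from
      funext fun y => commA hv hb hΞ' hbn hf y, ih (entH hv hf),
      ← Function.iterate_succ_apply]


lemma itd_two (f : ℂ → ℂ) : iteratedDeriv 2 f = deriv (deriv f) := by
  rw [show (2 : ℕ) = 1 + 1 from rfl, iteratedDeriv_succ, iteratedDeriv_one]

lemma itd_three (f : ℂ → ℂ) : iteratedDeriv 3 f = deriv (deriv (deriv f)) := by
  rw [show (3 : ℕ) = 2 + 1 from rfl, iteratedDeriv_succ, itd_two]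

lemma Aop_eq (v : ℂ → ℂ) (g : ℕ) (a : ℕ → ℂ → ℂ) (u : ℂ → ℂ) (x : ℂ) :
    Aop v g a u x = Ab v g (fun i => a (g - i)) u x := by
  show _ = ∑ i ∈ range (g + 1), Sb (fun i => a (g - i)) i ((Hop v)^[i] u) x
  unfold Aop
  rw [← Finset.sum_range_reflect]
  refine Finset.sum_congr rfl fun i hi => ?_
  have hi' : i ≤ g := by rw [mem_range] at hi; omega
  have e1 : g + 1 - 1 - i = g - i := by omega
  have e2 : g - (g - i) = i := Nat.sub_sub_self hi'
  rw [e1, e2]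
  rfl

end ASQ

open ASQ in
/-- Let `Ξ(x,E) = ∑ a_{g-i}(x)Eⁱ` (with `a₀ ≡ 1`) solve `Ξ''' - 4(v-E)Ξ' - 2v'Ξ = 0` for
all `E`, let `A` be the associated operator of order `2g+1`, and let
`Q(E) = ∑_{k=0}^{2g+1} q_k E^k` be the monic polynomial of degree `2g+1` given by
`Q(E) = Ξ²(E-v) + (1/2)Ξ·∂ₓ²Ξ - (1/4)(∂ₓΞ)²`. Then `A² + Q(H) = 0` as operators. -/
theorem A_squared_plus_Q_of_H
    (v : ℂ → ℂ) (g : ℕ) (a : ℕ → ℂ → ℂ) (q : ℕ → ℂ)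
    (hv : Differentiable ℂ v) (ha : ∀ j, Differentiable ℂ (a j))
    (ha0 : ∀ x, a 0 x = 1)
    (hΞ : ∀ E x : ℂ,
      iteratedDeriv 3 (fun t => ∑ i ∈ Finset.range (g + 1), a (g - i) t * E ^ i) x
        - 4 * (v x - E) * deriv (fun t => ∑ i ∈ Finset.range (g + 1), a (g - i) t * E ^ i) x
        - 2 * deriv v x * (∑ i ∈ Finset.range (g + 1), a (g - i) x * E ^ i) = 0)
    (hmonic : q (2 * g + 1) = 1)
    (hQ : ∀ E x : ℂ,
      ∑ k ∈ Finset.range (2 * g + 2), q k * E ^ k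
        = (∑ i ∈ Finset.range (g + 1), a (g - i) x * E ^ i) ^ 2 * (E - v x)
          + (1/2) * (∑ i ∈ Finset.range (g + 1), a (g - i) x * E ^ i)
              * iteratedDeriv 2 (fun t => ∑ i ∈ Finset.range (g + 1), a (g - i) t * E ^ i) x
          - (1/4) * (deriv (fun t => ∑ i ∈ Finset.range (g + 1), a (g - i) t * E ^ i) x) ^ 2) :
    ∀ f : ℂ → ℂ, Differentiable ℂ f → ∀ x : ℂ,
      Aop v g a (Aop v g a f) x
        + ∑ k ∈ Finset.range (2 * g + 2), q k * ((Hop v)^[k] f) x = 0 := by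
  intro f hf x
  set b : ℕ → ℂ → ℂ := fun i => a (g - i) with hbdef
  have hb : ∀ i, Differentiable ℂ (b i) := fun i => ha (g - i)
  have hbn : ∀ y, deriv (b g) y = 0 := by
    intro y
    have hb1 : b g = fun _ => (1 : ℂ) := by
      funext t
      show a (g - g) t = 1
      rw [Nat.sub_self]
      exact ha0 t
    rw [hb1, deriv_const]
  have hΞ' : ∀ E x : ℂ, deriv (deriv (deriv (Xi g b E))) x
      - 4 * (v x - E) * deriv (Xi g b E) x - 2 * deriv v x * Xi g b E x = 0 := by
    intro E x
    have h := hΞ E x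
    rw [itd_three] at h
    exact h
  have hQ' : ∀ E x : ℂ, ∑ k ∈ range (2 * g + 2), q k * E ^ k
      = (Xi g b E x) ^ 2 * (E - v x)
        + (1/2) * Xi g b E x * deriv (deriv (Xi g b E)) x
        - (1/4) * (deriv (Xi g b E) x) ^ 2 := by
    intro E x
    have h := hQ E x
    rw [itd_two] at h
    exact h
  have hAeq : Aop v g a = Ab v g b := by
    funext u y
    exact Aop_eq v g a u y
  rw [hAeq]
  -- Step 1-2 : A²f as a double sum
  have hstep : Ab v g b (Ab v g b f) x
      = ∑ i ∈ range (g + 1), ∑ j ∈ range (g + 1), Sb b i (Sb b j ((Hop v)^[i + j] f)) x := by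
    show ∑ i ∈ range (g + 1), Sb b i ((Hop v)^[i] (Ab v g b f)) x = _
    refine Finset.sum_congr rfl fun i _ => ?_
    rw [commAk hv hb hΞ' hbn hf i]
    have h6 : Ab v g b ((Hop v)^[i] f)
        = fun y => ∑ j ∈ range (g + 1), Sb b j ((Hop v)^[i + j] f) y := by
      funext y
      show ∑ j ∈ range (g + 1), Sb b j ((Hop v)^[j] ((Hop v)^[i] f)) y = _
      refine Finset.sum_congr rfl fun j _ => ?_
      rw [show (Hop v)^[j] ((Hop v)^[i] f) = (Hop v)^[i + j] f from by
        rw [add_comm i j]; exact (Function.iterate_add_apply (Hop v) j i f).symm]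
    rw [h6, Sb_sum hb (fun j => entS hb (entHk hv hf (i + j)) j) i x]
  have hd1 : ∀ i ∈ range (g + 1), ∀ j ∈ range (g + 1), i + j < 2 * g + 2 := by
    intro i hi j hj; rw [mem_range] at hi hj; omega
  have hd2 : ∀ i ∈ range (g + 1), ∀ j ∈ range (g + 1), i + j + 1 < 2 * g + 2 := by
    intro i hi j hj; rw [mem_range] at hi hj; omega
  have hAA : Ab v g b (Ab v g b f) x
      = ∑ m ∈ range (2 * g + 2), ∑ i ∈ range (g + 1), ∑ j ∈ range (g + 1),
          (if i + j = m then Sb b i (Sb b j ((Hop v)^[m] f)) x else 0) := by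
    rw [hstep, swap_val (fun i j m => Sb b i (Sb b j ((Hop v)^[m] f)) x) (fun i j => i + j) hd1]
  rw [hAA, ← Finset.sum_add_distrib]
  -- per-coefficient identity
  have key : ∀ m ∈ range (2 * g + 2),
      (∑ i ∈ range (g + 1), ∑ j ∈ range (g + 1),
          (if i + j = m then Sb b i (Sb b j ((Hop v)^[m] f)) x else 0))
        + q m * ((Hop v)^[m] f) x
      = (∑ i ∈ range (g + 1), ∑ j ∈ range (g + 1),
            (if i + j + 1 = m then b i x * b j x * ((Hop v)^[m] f) x else 0))
        - (∑ i ∈ range (g + 1), ∑ j ∈ range (g + 1),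
            (if i + j = m then b i x * b j x * ((Hop v)^[m + 1] f) x else 0)) := by
    intro m hm
    have h := squareS hv hb hQ' (entHk hv hf m) x m (mem_range.mp hm)
    have e : Hop v ((Hop v)^[m] f) = (Hop v)^[m + 1] f :=
      (Function.iterate_succ_apply' (Hop v) m f).symm
    rw [e] at h
    have d1 : (∑ i ∈ range (g + 1), ∑ j ∈ range (g + 1),
          if i + j = m then b i x * b j x else 0) * ((Hop v)^[m + 1] f) x
        = ∑ i ∈ range (g + 1), ∑ j ∈ range (g + 1),
          (if i + j = m then b i x * b j x * ((Hop v)^[m + 1] f) x else 0) := by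
      rw [Finset.sum_mul]
      exact Finset.sum_congr rfl fun i _ => by
        rw [Finset.sum_mul]
        exact Finset.sum_congr rfl fun j _ => by rw [ite_mul, zero_mul]
    have d2 : (∑ i ∈ range (g + 1), ∑ j ∈ range (g + 1),
          if i + j + 1 = m then b i x * b j x else 0) * ((Hop v)^[m] f) x
        = ∑ i ∈ range (g + 1), ∑ j ∈ range (g + 1),
          (if i + j + 1 = m then b i x * b j x * ((Hop v)^[m] f) x else 0) := by
      rw [Finset.sum_mul]
      exact Finset.sum_congr rfl fun i _ => by
        rw [Finset.sum_mul]
        exact Finset.sum_congr rfl fun j _ => by rw [ite_mul, zero_mul]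
    rw [d1, d2] at h
    linear_combination h
  rw [Finset.sum_congr rfl key, Finset.sum_sub_distrib]
  rw [swap_val (fun i j m => b i x * b j x * ((Hop v)^[m] f) x) (fun i j => i + j + 1) hd2,
    swap_val (fun i j m => b i x * b j x * ((Hop v)^[m + 1] f) x) (fun i j => i + j) hd1]
  simp
end

section
/- Suppose f₁ and f₂ are holomorphic solutions of -f'' + v·f = E·f on ℂ (v entire for simplicity), and Ψ is a nonvanishing holomorphic function such that for some j, f₁(x+2ω_j)Ψ(x+2ω_j) = ε·f₁(x)Ψ(x) and f₂(x+2ω_j)Ψ(x+2ω_j) = -ε·f₂(x)Ψ(x) with ε ∈ {±1}, and Ψ(x+2ω_j)² = Ψ(x)². Then f₁ and f₂ are linearly dependent. (Equivalently: a given Schrödinger equation cannot have nonzero solutions in two distinct quasi-periodicity classes ε and -ε.) -/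
open Complex

/-- A Schrödinger equation cannot have nonzero solutions in two distinct
quasi-periodicity classes `ε` and `-ε`: if `f₁, f₂` solve `-f'' + v·f = E·f` and
`f₁Ψ`, `f₂Ψ` are quasi-periodic with opposite signs `ε`, `-ε` under `x ↦ x + 2ω_j`
(where `Ψ` is nonvanishing with `Ψ(x+2ω_j)² = Ψ(x)²`), then `f₁` and `f₂` are
linearly dependent. -/
theorem no_two_quasiperiodicity_classes
    (v Ψ f₁ f₂ : ℂ → ℂ) (E ω ε : ℂ) (hω : ω ≠ 0)
    (hε : ε = 1 ∨ ε = -1)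
    (hv : Differentiable ℂ v)
    (hΨ : Differentiable ℂ Ψ) (hΨ0 : ∀ x, Ψ x ≠ 0)
    (hΨp : ∀ x, Ψ (x + 2 * ω) ^ 2 = Ψ x ^ 2)
    (hf₁ : Differentiable ℂ f₁) (hf₂ : Differentiable ℂ f₂)
    (he₁ : ∀ x, -(iteratedDeriv 2 f₁ x) + v x * f₁ x = E * f₁ x)
    (he₂ : ∀ x, -(iteratedDeriv 2 f₂ x) + v x * f₂ x = E * f₂ x)
    (hq₁ : ∀ x, f₁ (x + 2 * ω) * Ψ (x + 2 * ω) = ε * (f₁ x * Ψ x))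
    (hq₂ : ∀ x, f₂ (x + 2 * ω) * Ψ (x + 2 * ω) = -ε * (f₂ x * Ψ x)) :
    ¬ LinearIndependent ℂ ![f₁, f₂] := by
  intro hli
  have hε2 : ε ^ 2 = 1 := by rcases hε with h | h <;> rw [h] <;> ring
  -- derivatives of entire functions are entire
  have hA₁ : AnalyticOnNhd ℂ f₁ Set.univ := fun w _ => hf₁.analyticAt w
  have hA₂ : AnalyticOnNhd ℂ f₂ Set.univ := fun w _ => hf₂.analyticAt w
  have hAΨ : AnalyticOnNhd ℂ Ψ Set.univ := fun w _ => hΨ.analyticAt w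
  have hd₁ : Differentiable ℂ (deriv f₁) := fun z =>
    (hA₁.deriv z (Set.mem_univ z)).differentiableAt
  have hd₂ : Differentiable ℂ (deriv f₂) := fun z =>
    (hA₂.deriv z (Set.mem_univ z)).differentiableAt
  have hdΨ : Differentiable ℂ (deriv Ψ) := fun z =>
    (hAΨ.deriv z (Set.mem_univ z)).differentiableAt
  -- second derivatives from the ODE
  have hdd₁ : ∀ x, deriv (deriv f₁) x = (v x - E) * f₁ x := by
    intro x
    have h := he₁ x
    rw [show iteratedDeriv 2 f₁ = deriv (deriv f₁) by
      rw [iteratedDeriv_succ, iteratedDeriv_one]] at h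
    linear_combination -h
  have hdd₂ : ∀ x, deriv (deriv f₂) x = (v x - E) * f₂ x := by
    intro x
    have h := he₂ x
    rw [show iteratedDeriv 2 f₂ = deriv (deriv f₂) by
      rw [iteratedDeriv_succ, iteratedDeriv_one]] at h
    linear_combination -h
  -- the Wronskian
  set W : ℂ → ℂ := fun x => f₂ x * deriv f₁ x - f₁ x * deriv f₂ x with hWdef
  have hWdiff : Differentiable ℂ W := (hf₂.mul hd₁).sub (hf₁.mul hd₂)
  have hW' : ∀ x, deriv W x = 0 := by
    intro x
    have h : HasDerivAt W
        ((deriv f₂ x * deriv f₁ x + f₂ x * deriv (deriv f₁) x)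
          - (deriv f₁ x * deriv f₂ x + f₁ x * deriv (deriv f₂) x)) x :=
      (((hf₂ x).hasDerivAt.mul (hd₁ x).hasDerivAt).sub
        ((hf₁ x).hasDerivAt.mul (hd₂ x).hasDerivAt))
    rw [h.deriv, hdd₁ x, hdd₂ x]; ring
  have hWc : ∀ x y, W x = W y := fun x y => is_const_of_deriv_eq_zero hWdiff hW' x y
  -- the quasi-periodic products and their derivatives
  set G₁ : ℂ → ℂ := fun x => f₁ x * Ψ x with hG₁def
  set G₂ : ℂ → ℂ := fun x => f₂ x * Ψ x with hG₂def
  have hG₁d : Differentiable ℂ G₁ := hf₁.mul hΨ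
  have hG₂d : Differentiable ℂ G₂ := hf₂.mul hΨ
  have hdG₁ : ∀ x, deriv G₁ x = deriv f₁ x * Ψ x + f₁ x * deriv Ψ x := fun x =>
    ((hf₁ x).hasDerivAt.mul (hΨ x).hasDerivAt).deriv
  have hdG₂ : ∀ x, deriv G₂ x = deriv f₂ x * Ψ x + f₂ x * deriv Ψ x := fun x =>
    ((hf₂ x).hasDerivAt.mul (hΨ x).hasDerivAt).deriv
  have hper₁ : ∀ x, deriv G₁ (x + 2 * ω) = ε * deriv G₁ x := by
    intro x
    have hfun : (fun y => G₁ (y + 2 * ω)) = fun y => ε * G₁ y := funext fun y => hq₁ y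
    calc deriv G₁ (x + 2 * ω) = deriv (fun y => G₁ (y + 2 * ω)) x :=
          (deriv_comp_add_const _ _ _).symm
      _ = deriv (fun y => ε * G₁ y) x := by rw [hfun]
      _ = ε * deriv G₁ x := deriv_const_mul ε (hG₁d x)
  have hper₂ : ∀ x, deriv G₂ (x + 2 * ω) = -ε * deriv G₂ x := by
    intro x
    have hfun : (fun y => G₂ (y + 2 * ω)) = fun y => -ε * G₂ y := funext fun y => hq₂ y
    calc deriv G₂ (x + 2 * ω) = deriv (fun y => G₂ (y + 2 * ω)) x :=
          (deriv_comp_add_const _ _ _).symm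
      _ = deriv (fun y => -ε * G₂ y) x := by rw [hfun]
      _ = -ε * deriv G₂ x := deriv_const_mul (-ε) (hG₂d x)
  -- the Wronskian of G₁, G₂ equals Ψ² · W and flips sign under translation
  have hWG : ∀ x, G₂ x * deriv G₁ x - G₁ x * deriv G₂ x = Ψ x ^ 2 * W x := by
    intro x
    rw [hdG₁ x, hdG₂ x]
    simp only [hG₁def, hG₂def, hWdef]
    ring
  have hW0 : ∀ x, W x = 0 := by
    intro x
    have h1 : G₂ (x + 2 * ω) * deriv G₁ (x + 2 * ω) - G₁ (x + 2 * ω) * deriv G₂ (x + 2 * ω)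
        = -(ε ^ 2) * (G₂ x * deriv G₁ x - G₁ x * deriv G₂ x) := by
      have e₁ := hq₁ x
      have e₂ := hq₂ x
      simp only [hG₁def, hG₂def] at *
      rw [hper₁ x, hper₂ x, e₁, e₂]
      ring
    rw [hWG, hWG, hΨp x, hε2, hWc (x + 2 * ω) x] at h1
    have hΨx := hΨ0 x
    have h2 : Ψ x ^ 2 * (2 * W x) = 0 := by linear_combination h1
    have := mul_eq_zero.mp h2
    rcases this with h | h
    · exact absurd h (pow_ne_zero 2 hΨx)
    · have : (2 : ℂ) ≠ 0 := two_ne_zero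
      rcases mul_eq_zero.mp h with h' | h'
      · exact absurd h' this
      · exact h'
  -- f₂ is not identically zero
  have hf₂ne : f₂ ≠ 0 := by
    have := hli.ne_zero 1
    simpa using this
  obtain ⟨z₀, hz₀⟩ : ∃ z, f₂ z ≠ 0 := by
    by_contra h
    push_neg at h
    exact hf₂ne (funext fun z => h z)
  set c : ℂ := f₁ z₀ / f₂ z₀ with hc
  set g : ℂ → ℂ := fun x => f₁ x - c * f₂ x with hgdef
  have hgd : Differentiable ℂ g := hf₁.sub (hf₂.const_mul c)
  have hgz₀ : g z₀ = 0 := by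
    simp only [hgdef, hc]
    field_simp
    ring
  -- a ball around z₀ where f₂ ≠ 0
  have hopen : IsOpen {x : ℂ | f₂ x ≠ 0} := isOpen_ne.preimage hf₂.continuous
  obtain ⟨r, hr, hball⟩ : ∃ r > 0, Metric.ball z₀ r ⊆ {x : ℂ | f₂ x ≠ 0} :=
    Metric.mem_nhds_iff.mp (hopen.mem_nhds hz₀)
  set q : ℂ → ℂ := fun x => g x / f₂ x with hqdef
  have hq0 : ∀ x ∈ Metric.ball z₀ r, HasDerivAt q 0 x := by
    intro x hx
    have hne : f₂ x ≠ 0 := hball hx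
    have hgx : HasDerivAt g (deriv f₁ x - c * deriv f₂ x) x :=
      (hf₁ x).hasDerivAt.sub ((hf₂ x).hasDerivAt.const_mul c)
    have hdq : HasDerivAt q
        (((deriv f₁ x - c * deriv f₂ x) * f₂ x - g x * deriv f₂ x) / f₂ x ^ 2) x :=
      hgx.div (hf₂ x).hasDerivAt hne
    have hnum : (deriv f₁ x - c * deriv f₂ x) * f₂ x - g x * deriv f₂ x = W x := by
      simp only [hgdef, hWdef]; ring
    rw [hnum, hW0 x, zero_div] at hdq
    exact hdq
  have hfd : ∀ x ∈ Metric.ball z₀ r, fderivWithin ℂ q (Metric.ball z₀ r) x = 0 := by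
    intro x hx
    rw [fderivWithin_of_isOpen Metric.isOpen_ball hx, (hq0 x hx).hasFDerivAt.fderiv]
    ext1
    simp
  have hqconst : ∀ x ∈ Metric.ball z₀ r, q x = q z₀ := by
    intro x hx
    exact (convex_ball z₀ r).is_const_of_fderivWithin_eq_zero
      (fun y hy => ((hq0 y hy).differentiableAt).differentiableWithinAt) hfd hx
      (Metric.mem_ball_self hr)
  have hgball : ∀ x ∈ Metric.ball z₀ r, g x = 0 := by
    intro x hx
    have hne : f₂ x ≠ 0 := hball hx
    have := hqconst x hx
    simp only [hqdef] at this
    rw [hgz₀, zero_div] at this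
    exact (div_eq_zero_iff.mp this).resolve_right hne
  -- identity theorem: g ≡ 0
  have hgev : g =ᶠ[nhds z₀] 0 :=
    Filter.eventuallyEq_of_mem (Metric.ball_mem_nhds z₀ hr) hgball
  have hgzero : ∀ x, g x = 0 := by
    have hA : AnalyticOnNhd ℂ g Set.univ := fun w _ => hgd.analyticAt w
    intro x
    exact hA.eqOn_zero_of_preconnected_of_eventuallyEq_zero isPreconnected_univ
      (Set.mem_univ z₀) hgev (Set.mem_univ x)
  -- contradiction with linear independence
  have := Fintype.linearIndependent_iff.mp hli ![1, -c]
  have hsum : ∑ i, ![(1 : ℂ), -c] i • ![f₁, f₂] i = 0 := by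
    rw [Fin.sum_univ_two]
    funext x
    have := hgzero x
    simp only [hgdef] at this
    simp only [Matrix.cons_val_zero, Matrix.cons_val_one, Matrix.head_cons,
      Pi.add_apply, Pi.smul_apply, smul_eq_mul, Pi.zero_apply]
    linear_combination this
  have h0 := this hsum 0
  simp at h0
end
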